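/- Fix ε > 0 and suppose p = p(n) satisfies p·n^{1/6} → ∞ and p < 1 − ε. Then there exists C > 0 depending only on ε such that for all sufficiently large n the following holds: for every mine assignment M* on G_n with fewer than n^{0.9} mines, the random mine assignment M*_p contains more than C·n·p^6 occurrences of the patterns P1 and P2 (counted together) with probability at least 1 − exp(−C·n·p^6/4). -/

import Mathlib

open scoped Classical

namespace Minesweeper

/-- The possible values of a cell in a grid state. -/
inductive CellState where
  | hidden : CellState
  | clue : Fin 9 → CellState
  | flag : CellState
  | mine : CellState
deriving DecidableEq

/-- The neighborhood of a cell: the cell itself together with all cells at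
ℓ∞-distance 1 from it. -/
def nbhd {a b : ℕ} (c : Fin a × Fin b) : Finset (Fin a × Fin b) :=
  Finset.univ.filter (fun c' =>
    ((c.1 : ℤ) - (c'.1 : ℤ)).natAbs ≤ 1 ∧ ((c.2 : ℤ) - (c'.2 : ℤ)).natAbs ≤ 1)

/-- The number of mines of `M` in the neighborhood of `c`. -/
def mineCount {a b : ℕ} (M : Fin a × Fin b → Bool) (c : Fin a × Fin b) : ℕ :=
  ((nbhd c).filter (fun c' => M c' = true)).card

/-- The total number of mines of a mine assignment. -/
def numMines {a b : ℕ} (M : Fin a × Fin b → Bool) : ℕ :=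
  (Finset.univ.filter (fun c => M c = true)).card

/-- A mine assignment `M` and a grid state `S` are consistent. -/
def Consistent {a b : ℕ} (M : Fin a × Fin b → Bool) (S : Fin a × Fin b → CellState) : Prop :=
  ∀ c, S c = CellState.hidden
    ∨ (∃ k : Fin 9, S c = CellState.clue k ∧ (k : ℕ) = mineCount M c)
    ∨ ((S c = CellState.flag ∨ S c = CellState.mine) ∧ M c = true)

/-- An algorithm assigns to every grid state having a hidden cell one of its hidden cells. -/
structure Algorithm (a b : ℕ) where
  move : (Fin a × Fin b → CellState) → Fin a × Fin b
  move_hidden : ∀ S : Fin a × Fin b → CellState,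
    (∃ c, S c = CellState.hidden) → S (move S) = CellState.hidden

/-- Revealing the cell `c0`. -/
def reveal {a b : ℕ} (M : Fin a × Fin b → Bool) (S : Fin a × Fin b → CellState)
    (c0 : Fin a × Fin b) : Fin a × Fin b → CellState :=
  fun c => if c = c0 then
    (if M c0 = true then CellState.mine
      else CellState.clue ⟨mineCount M c0 % 9, Nat.mod_lt _ (by norm_num)⟩)
    else S c

/-- The sequence of grid states obtained by running the algorithm `A` against the
mine assignment `M`, starting from the all-hidden state. -/
def gameState {a b : ℕ} (A : Algorithm a b) (M : Fin a × Fin b → Bool) :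
    ℕ → (Fin a × Fin b → CellState)
  | 0 => fun _ => CellState.hidden
  | t + 1 => reveal M (gameState A M t) (A.move (gameState A M t))

/-- The algorithm `A` solves the mine assignment `M`. -/
def Solves {a b : ℕ} (A : Algorithm a b) (M : Fin a × Fin b → Bool) : Prop :=
  ∃ t : ℕ, (∀ c, gameState A M t c ≠ CellState.mine) ∧
    (∀ c, gameState A M t c = CellState.hidden → M c = true)

/-- The probability of the event `E` under the random mine assignment on the `a × b` grid
in which each cell independently carries a mine with probability `p`. -/
noncomputable def mineProb (a b : ℕ) (p : ℝ) (E : Set (Fin a × Fin b → Bool)) : ℝ :=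
  ∑ M : Fin a × Fin b → Bool,
    if M ∈ E then (∏ c : Fin a × Fin b, if M c = true then p else 1 - p) else 0

/-- The probability of the event `E` under the random mine assignment `M₀_p` that agrees
with `M₀` on the mines of `M₀` and puts a mine on each empty cell of `M₀` independently
with probability `p`. -/
noncomputable def mineProbAbove (a b : ℕ) (p : ℝ) (M₀ : Fin a × Fin b → Bool)
    (E : Set (Fin a × Fin b → Bool)) : ℝ :=
  ∑ M : Fin a × Fin b → Bool,
    if M ∈ E then
      (∏ c : Fin a × Fin b,
        if M₀ c = true then (if M c = true then (1 : ℝ) else 0)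
        else (if M c = true then p else 1 - p))
    else 0

/-- A pattern: no mines in the first/last two rows and columns, at least one mine in
the third and third-to-last rows and columns. -/
def IsPattern {h w : ℕ} (P : Fin h × Fin w → Bool) : Prop :=
  (∀ c, P c = true → 2 ≤ (c.1 : ℕ) ∧ (c.1 : ℕ) + 3 ≤ h ∧ 2 ≤ (c.2 : ℕ) ∧ (c.2 : ℕ) + 3 ≤ w)
  ∧ (∃ c, P c = true ∧ (c.1 : ℕ) = 2) ∧ (∃ c, P c = true ∧ (c.1 : ℕ) + 3 = h)
  ∧ (∃ c, P c = true ∧ (c.2 : ℕ) = 2) ∧ (∃ c, P c = true ∧ (c.2 : ℕ) + 3 = w)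

/-- An ambiguous grid state. -/
def AmbiguousState {a b : ℕ} (S : Fin a × Fin b → CellState) : Prop :=
  (∃ c, S c = CellState.hidden) ∧ (∀ c, S c ≠ CellState.mine) ∧
  ∀ c, S c = CellState.hidden →
    ∃ P P' : Fin a × Fin b → Bool, IsPattern P ∧ IsPattern P' ∧
      Consistent P S ∧ Consistent P' S ∧ P c = true ∧ P' c = false

/-- An ambiguous pattern: a pattern consistent with some ambiguous grid state. -/
def AmbiguousPattern {a b : ℕ} (P : Fin a × Fin b → Bool) : Prop :=
  IsPattern P ∧ ∃ S : Fin a × Fin b → CellState, AmbiguousState S ∧ Consistent P S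

/-- The pattern `P1` (rows and columns numbered from 0 to 7 here). -/
def P1 : Fin 8 × Fin 8 → Bool := fun c =>
  decide (((c.1 : ℕ), (c.2 : ℕ)) ∈ [(2,2),(2,5),(5,2),(5,5),(3,3),(4,4)])

/-- The pattern `P2` (rows and columns numbered from 0 to 7 here). -/
def P2 : Fin 8 × Fin 8 → Bool := fun c =>
  decide (((c.1 : ℕ), (c.2 : ℕ)) ∈ [(2,2),(2,5),(5,2),(5,5),(3,4),(4,3)])

/-- `M` contains an occurrence of the pattern `P` at offset `(r, s)`. -/
def ContainsAt {a b h w : ℕ} (M : Fin a × Fin b → Bool) (P : Fin h × Fin w → Bool)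
    (r s : ℕ) : Prop :=
  ∃ (hr : r + h ≤ a) (hs : s + w ≤ b),
    ∀ (i : Fin h) (j : Fin w), M (⟨r + i, by omega⟩, ⟨s + j, by omega⟩) = P (i, j)

/-- `M` contains an occurrence of the pattern `P`. -/
def Contains {a b h w : ℕ} (M : Fin a × Fin b → Bool) (P : Fin h × Fin w → Bool) : Prop :=
  ∃ r s, ContainsAt M P r s

/-- The number of occurrences of the pattern `P` in `M`. -/
noncomputable def numOcc {a b h w : ℕ} (M : Fin a × Fin b → Bool)
    (P : Fin h × Fin w → Bool) : ℕ :=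
  ((Finset.range a ×ˢ Finset.range b).filter (fun rs => ContainsAt M P rs.1 rs.2)).card

/-- The envelope of a grid state: the union of the neighborhoods of its hidden cells. -/
noncomputable def envelope {a b : ℕ} (S : Fin a × Fin b → CellState) :
    Finset (Fin a × Fin b) :=
  Finset.univ.filter (fun c => ∃ c', S c' = CellState.hidden ∧ c ∈ nbhd c')

/-- The number of flags of `S` in the neighborhood of `c`. -/
def flagCount {a b : ℕ} (S : Fin a × Fin b → CellState) (c : Fin a × Fin b) : ℕ :=
  ((nbhd c).filter (fun c' => S c' = CellState.flag)).card

/-- The number of hidden cells of `S` in the neighborhood of `c`. -/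
def hiddenCount {a b : ℕ} (S : Fin a × Fin b → CellState) (c : Fin a × Fin b) : ℕ :=
  ((nbhd c).filter (fun c' => S c' = CellState.hidden)).card

/-- A border cell of the envelope of `S`. -/
noncomputable def IsBorderCell {a b : ℕ} (S : Fin a × Fin b → CellState)
    (c : Fin a × Fin b) : Prop :=
  c ∈ envelope S ∧ ((nbhd c).filter (fun c' => c' ∈ envelope S)).card < 9

/-- The orthogonal (horizontal/vertical) neighbors of a cell. -/
def orthNbrs {a b : ℕ} (c : Fin a × Fin b) : Finset (Fin a × Fin b) :=
  (nbhd c).filter (fun c' => c' ≠ c ∧ (c'.1 = c.1 ∨ c'.2 = c.2))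

/-- A corner cell of the envelope of `S`: a border cell at least two of whose orthogonal
neighbors lie outside the envelope. -/
noncomputable def IsCornerCell {a b : ℕ} (S : Fin a × Fin b → CellState)
    (c : Fin a × Fin b) : Prop :=
  IsBorderCell S c ∧ 2 ≤ ((orthNbrs c).filter (fun c' => c' ∉ envelope S)).card

/-- The number of mines of `M` in the `100 × 100` subgrid with upper-left offset `(r, s)`. -/
def subgridMineCount {a b : ℕ} (M : Fin a × Fin b → Bool) (r s : ℕ) : ℕ :=
  (Finset.univ.filter (fun c : Fin a × Fin b =>
    M c = true ∧ r ≤ (c.1 : ℕ) ∧ (c.1 : ℕ) < r + 100 ∧ s ≤ (c.2 : ℕ) ∧ (c.2 : ℕ) < s + 100)).card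

/-- The cells revealed when starting from the upper-left corner and iteratively revealing
every cell in the neighborhood of a revealed cell with value 0. -/
inductive Revealed {a b : ℕ} (M : Fin a × Fin b → Bool) : Fin a × Fin b → Prop where
  | corner (c : Fin a × Fin b) : (c.1 : ℕ) = 0 → (c.2 : ℕ) = 0 → Revealed M c
  | step (c c' : Fin a × Fin b) : Revealed M c → M c = false → mineCount M c = 0 →
      c' ∈ nbhd c → Revealed M c'

/-- A cell whose value in the auto-revealed grid state `S_{n,p}` is not the clue 0. -/
def NonzeroCell {a b : ℕ} (M : Fin a × Fin b → Bool) (c : Fin a × Fin b) : Prop :=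
  ¬(Revealed M c ∧ M c = false ∧ mineCount M c = 0)

/-- Two cells lie in the same island of the auto-revealed grid state `S_{n,p}`:
they are joined by a path of non-zero cells, consecutive ones at ℓ∞-distance 1. -/
def SameIsland {a b : ℕ} (M : Fin a × Fin b → Bool) (c c' : Fin a × Fin b) : Prop :=
  Relation.ReflTransGen
    (fun x y => NonzeroCell M x ∧ NonzeroCell M y ∧ x ≠ y ∧ y ∈ nbhd x) c c'

/-- The mine assignment at time `t` of the random mine process encoded by the
bijection `f` (the mine added at time `i + 1` is at cell `f i`). -/
def procAssign {a b : ℕ} (f : Fin (a * b) → Fin a × Fin b) (t : ℕ) :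
    Fin a × Fin b → Bool :=
  fun c => decide (∃ i : Fin (a * b), (i : ℕ) < t ∧ f i = c)

/-- The probability of the event `E` for the random mine process, realized as a uniformly
random bijective ordering of the cells of the grid. -/
noncomputable def procProb (a b : ℕ) (E : Set (Fin (a * b) → Fin a × Fin b)) : ℝ :=
  ((Finset.univ.filter
      (fun f : Fin (a * b) → Fin a × Fin b => Function.Bijective f ∧ f ∈ E)).card : ℝ) /
  ((Finset.univ.filter
      (fun f : Fin (a * b) → Fin a × Fin b => Function.Bijective f)).card : ℝ)

/-- The hitting time `τ`: the first time `t` at which the process contains an occurrence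
of `P1` or `P2` (`⊤` if there is no such time). -/
noncomputable def tauProc {a b : ℕ} (f : Fin (a * b) → Fin a × Fin b) : ℕ∞ :=
  sInf ((fun t : ℕ => (t : ℕ∞)) ''
    {t | Contains (procAssign f t) P1 ∨ Contains (procAssign f t) P2})

/-!
Cut the grid into disjoint `8 × 8` tiles. Fewer than `n ^ 0.9` mines of `M₀` spoil fewer than
`n / 512` of the roughly `n / 64` tiles, and on each of the remaining ones `M₀_p` equals `P1`,
independently, with probability `q = p ^ 6 (1 - p) ^ 58 ≥ ε ^ 58 p ^ 6`. Each such tile is an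
occurrence of `P1`, so the count dominates a sum `X` of `m ≥ n / 512` independent
Bernoulli(`q`) variables, and `𝐏(X ≤ k) ≤ 2 ^ k 𝔼[2 ^ (-X)] = 2 ^ k (1 - q / 2) ^ m ≤
2 ^ k exp (-q m / 2) ≤ exp (-k / 4)` for `k = ε ^ 58 n p ^ 6 / 2048`.
-/

open Finset

section WeightedCube

variable {ι : Type*} {ρ : ι → Bool → ℝ}

lemma le_one_of_add_eq_one (hρ₀ : ∀ c x, 0 ≤ ρ c x) (hρ : ∀ c, ρ c false + ρ c true = 1)
    (c : ι) (x : Bool) : ρ c x ≤ 1 := by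
  have := hρ c; have := hρ₀ c false; have := hρ₀ c true
  cases x <;> linarith

variable [Fintype ι] [DecidableEq ι]

/-- The probability of `E` when the coordinates are independent and coordinate `c` takes
the value `x` with probability `ρ c x`. -/
noncomputable def cubeProb (ρ : ι → Bool → ℝ) (E : Set (ι → Bool)) : ℝ :=
  ∑ M : ι → Bool, if M ∈ E then ∏ c, ρ c (M c) else 0

lemma sum_prod_eq_one (hρ : ∀ c, ρ c false + ρ c true = 1) :
    ∑ M : ι → Bool, ∏ c, ρ c (M c) = 1 := by
  rw [← Fintype.prod_sum]
  simp [add_comm, hρ]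

lemma cubeProb_compl (hρ : ∀ c, ρ c false + ρ c true = 1) (E : Set (ι → Bool)) :
    cubeProb ρ Eᶜ = 1 - cubeProb ρ E := by
  rw [← sum_prod_eq_one hρ, eq_sub_iff_add_eq, cubeProb, cubeProb, ← sum_add_distrib]
  refine sum_congr rfl fun M _ => ?_
  by_cases h : M ∈ E <;> simp [h]

lemma cubeProb_mono (hρ₀ : ∀ c x, 0 ≤ ρ c x) {E F : Set (ι → Bool)} (h : E ⊆ F) :
    cubeProb ρ E ≤ cubeProb ρ F := by
  refine sum_le_sum fun M _ => ?_
  have := prod_nonneg fun c (_ : c ∈ univ) => hρ₀ c (M c)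
  split_ifs with hE hF hF <;> first | exact le_rfl | exact this | exact absurd (h hE) hF

lemma sum_agree_mul_prod (hρ : ∀ c, ρ c false + ρ c true = 1) (s : Finset ι)
    (g : ι → Bool) :
    ∑ M : ι → Bool, (if ∀ c ∈ s, M c = g c then 1 else 0) * ∏ c, ρ c (M c) =
      ∏ c ∈ s, ρ c (g c) := by
  set σ : ι → Bool → ℝ := fun c x => if c ∈ s ∧ x ≠ g c then 0 else ρ c x
  have hσ : ∀ M : ι → Bool,
      (if ∀ c ∈ s, M c = g c then 1 else 0) * ∏ c, ρ c (M c) = ∏ c, σ c (M c) := by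
    intro M
    by_cases h : ∀ c ∈ s, M c = g c
    · rw [if_pos h, one_mul]
      exact prod_congr rfl fun c _ => (if_neg fun hc : c ∈ s ∧ M c ≠ g c => hc.2 (h c hc.1)).symm
    · push Not at h
      obtain ⟨c, hc, hne⟩ := h
      rw [if_neg (by simpa using ⟨c, hc, hne⟩), zero_mul,
        prod_eq_zero (mem_univ c) (by simp [σ, hc, hne])]
  have hσsum : ∀ c, ∑ x, σ c x = if c ∈ s then ρ c (g c) else 1 := by
    intro c
    by_cases hc : c ∈ s
    · cases hg : g c <;> simp [σ, hc, hg]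
    · simp [σ, hc, add_comm, hρ]
  simp_rw [hσ, ← Fintype.prod_sum, hσsum, prod_ite_mem, univ_inter]

lemma sum_prod_one_add_agree_mul (hρ : ∀ c, ρ c false + ρ c true = 1) {κ : Type*}
    (B : κ → Finset ι) (J : Finset κ) (hB : (J : Set κ).PairwiseDisjoint B) (g : ι → Bool)
    (t : ℝ) :
    ∑ M : ι → Bool, (∏ j ∈ J, (1 + if ∀ c ∈ B j, M c = g c then t else 0)) *
        ∏ c, ρ c (M c) =
      ∏ j ∈ J, (1 + t * ∏ c ∈ B j, ρ c (g c)) := by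
  simp_rw [prod_one_add, sum_mul]
  rw [sum_comm]
  refine sum_congr rfl fun T hT => ?_
  calc ∑ M : ι → Bool, (∏ j ∈ T, if ∀ c ∈ B j, M c = g c then t else 0) * ∏ c, ρ c (M c)
      = ∑ M : ι → Bool, t ^ #T *
          ((if ∀ c ∈ T.biUnion B, M c = g c then 1 else 0) * ∏ c, ρ c (M c)) := by
        refine sum_congr rfl fun M _ => ?_
        have hiff : (∀ j ∈ T, ∀ c ∈ B j, M c = g c) ↔ ∀ c ∈ T.biUnion B, M c = g c := by
          simp only [mem_biUnion]
          exact ⟨fun h c ⟨j, hj, hc⟩ => h j hj c hc, fun h j hj c hc => h c ⟨j, hj, hc⟩⟩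
        simp only [prod_ite_zero, prod_const, hiff]
        split_ifs <;> ring
    _ = ∏ j ∈ T, t * ∏ c ∈ B j, ρ c (g c) := by
        rw [← mul_sum, sum_agree_mul_prod hρ, prod_biUnion (hB.subset (mem_powerset.mp hT)),
          prod_mul_distrib, prod_const]

lemma one_le_two_rpow_mul_half_pow {n : ℕ} {k : ℝ} (h : (n : ℝ) ≤ k) :
    1 ≤ (2 : ℝ) ^ k * (1 / 2) ^ n := by
  have h2 : (2 : ℝ) ^ n ≤ 2 ^ k := by
    rw [← Real.rpow_natCast]; exact Real.rpow_le_rpow_of_exponent_le one_le_two h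
  rw [one_div, inv_pow, ← div_eq_mul_inv, one_le_div (by positivity)]
  exact h2

/-- Lower-tail Chernoff bound for the number of disjoint blocks on which the configuration
agrees with `g`, obtained from the exponential moment `𝔼[2⁻ˣ]`. -/
theorem cubeProb_card_agree_le (hρ₀ : ∀ c x, 0 ≤ ρ c x) (hρ : ∀ c, ρ c false + ρ c true = 1)
    {κ : Type*} (B : κ → Finset ι) (J : Finset κ) (hB : (J : Set κ).PairwiseDisjoint B)
    (g : ι → Bool) {q : ℝ} (hq : ∀ j ∈ J, ∏ c ∈ B j, ρ c (g c) = q) (k : ℝ) :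
    cubeProb ρ {M | (#(J.filter fun j => ∀ c ∈ B j, M c = g c) : ℝ) ≤ k} ≤
      2 ^ k * Real.exp (-(q * #J) / 2) := by
  have hhalf : ∀ M : ι → Bool, (1 / 2 : ℝ) ^ #(J.filter fun j => ∀ c ∈ B j, M c = g c) =
      ∏ j ∈ J, (1 + if ∀ c ∈ B j, M c = g c then -1 / 2 else 0) := by
    intro M
    have h1 : ∀ j ∈ J, (1 + if ∀ c ∈ B j, M c = g c then -1 / 2 else 0 : ℝ) =
        if ∀ c ∈ B j, M c = g c then 1 / 2 else 1 := fun j _ => by split_ifs <;> norm_num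
    rw [prod_congr rfl h1, prod_ite, prod_const, prod_const, one_pow, mul_one]
  have hq1 : ∀ j ∈ J, q ≤ 1 := fun j hj => hq j hj ▸
    prod_le_one (fun c _ => hρ₀ c _) fun c _ => le_one_of_add_eq_one hρ₀ hρ c _
  calc cubeProb ρ {M | (#(J.filter fun j => ∀ c ∈ B j, M c = g c) : ℝ) ≤ k}
      ≤ ∑ M : ι → Bool, 2 ^ k *
          ((1 / 2 : ℝ) ^ #(J.filter fun j => ∀ c ∈ B j, M c = g c) * ∏ c, ρ c (M c)) := by
        refine sum_le_sum fun M _ => ?_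
        have hM := prod_nonneg fun c (_ : c ∈ univ) => hρ₀ c (M c)
        split_ifs with h
        · rw [← mul_assoc]
          exact le_mul_of_one_le_left hM (one_le_two_rpow_mul_half_pow h)
        · positivity
    _ = 2 ^ k * ∏ j ∈ J, (1 + -1 / 2 * q) := by
        simp_rw [← mul_sum, hhalf, sum_prod_one_add_agree_mul hρ B J hB g]
        rw [prod_congr rfl fun j hj => by rw [hq j hj]]
    _ ≤ 2 ^ k * ∏ _j ∈ J, Real.exp (-q / 2) := by
        refine mul_le_mul_of_nonneg_left (prod_le_prod (fun j hj => ?_) fun _ _ => ?_)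
          (by positivity)
        · linarith [hq1 j hj]
        · linarith [Real.add_one_le_exp (-q / 2)]
    _ = 2 ^ k * Real.exp (-(q * #J) / 2) := by
        rw [prod_const, ← Real.exp_nat_mul]; ring_nf

end WeightedCube

section Tiles

variable {a b h w : ℕ}

def tile (h w : ℕ) (uv : ℕ × ℕ) : Finset (Fin a × Fin b) :=
  univ.filter fun c => (c.1 : ℕ) / h = uv.1 ∧ (c.2 : ℕ) / w = uv.2

/-- Only the tiles lying entirely inside the grid. -/
def tileIndices (a b h w : ℕ) : Finset (ℕ × ℕ) :=
  range (a / h) ×ˢ range (b / w)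

def periodize [NeZero h] [NeZero w] (P : Fin h × Fin w → Bool) : Fin a × Fin b → Bool :=
  fun c => P (Fin.ofNat h c.1, Fin.ofNat w c.2)

lemma pairwiseDisjoint_tile (s : Set (ℕ × ℕ)) :
    s.PairwiseDisjoint (tile (a := a) (b := b) h w) := by
  intro uv _ uv' _ hne
  refine disjoint_left.mpr fun c hc hc' => hne ?_
  simp only [tile, mem_filter] at hc hc'
  exact Prod.ext (hc.2.1 ▸ hc'.2.1) (hc.2.2 ▸ hc'.2.2)

lemma mem_tile_of_lt {uv : ℕ × ℕ} {i j : ℕ} (hi : i < h) (hj : j < w)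
    (hr : h * uv.1 + i < a) (hs : w * uv.2 + j < b) :
    ((⟨h * uv.1 + i, hr⟩, ⟨w * uv.2 + j, hs⟩) : Fin a × Fin b) ∈ tile h w uv := by
  simp only [tile, mem_filter, mem_univ, true_and]
  constructor <;> rw [Nat.add_comm, Nat.add_mul_div_left _ _ (by omega),
    Nat.div_eq_of_lt ‹_›, zero_add]

lemma add_lt_of_mem_tileIndices {uv : ℕ × ℕ} (huv : uv ∈ tileIndices a b h w) {i j : ℕ}
    (hi : i < h) (hj : j < w) : h * uv.1 + i < a ∧ w * uv.2 + j < b := by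
  simp only [tileIndices, mem_product, mem_range] at huv
  have hu := Nat.mul_le_mul_left h (Nat.succ_le_of_lt huv.1)
  have hv := Nat.mul_le_mul_left w (Nat.succ_le_of_lt huv.2)
  have := Nat.mul_div_le a h
  have := Nat.mul_div_le b w
  constructor <;> linarith [Nat.mul_succ h uv.1, Nat.mul_succ w uv.2]

lemma ofNat_mul_add {i : ℕ} (hi : i < h) (u : ℕ) [NeZero h] :
    Fin.ofNat h (h * u + i) = ⟨i, hi⟩ :=
  Fin.ext <| by rw [Fin.val_ofNat, Nat.mul_add_mod, Nat.mod_eq_of_lt hi]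

lemma containsAt_of_agree_tile [NeZero h] [NeZero w] {M : Fin a × Fin b → Bool}
    {P : Fin h × Fin w → Bool} {uv : ℕ × ℕ} (huv : uv ∈ tileIndices a b h w)
    (hM : ∀ c ∈ tile h w uv, M c = periodize P c) : ContainsAt M P (h * uv.1) (w * uv.2) := by
  have hlast := add_lt_of_mem_tileIndices huv (Nat.sub_one_lt (NeZero.ne h))
    (Nat.sub_one_lt (NeZero.ne w))
  refine ⟨by omega, by omega, fun i j => ?_⟩
  have hij := add_lt_of_mem_tileIndices huv i.isLt j.isLt
  rw [hM _ (mem_tile_of_lt i.isLt j.isLt hij.1 hij.2), periodize, ofNat_mul_add i.isLt,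
    ofNat_mul_add j.isLt]

lemma card_agree_le_numOcc [NeZero h] [NeZero w] (M : Fin a × Fin b → Bool)
    (P : Fin h × Fin w → Bool) {J : Finset (ℕ × ℕ)} (hJ : J ⊆ tileIndices a b h w) :
    #(J.filter fun uv => ∀ c ∈ tile h w uv, M c = periodize P c) ≤ numOcc M P := by
  refine card_le_card_of_injOn (fun uv => (h * uv.1, w * uv.2)) (fun uv huv => ?_) ?_
  · obtain ⟨huvJ, hagree⟩ := mem_filter.mp huv
    have hocc := containsAt_of_agree_tile (hJ huvJ) hagree
    obtain ⟨hr, hs, -⟩ := id hocc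
    have := Nat.pos_of_neZero h
    have := Nat.pos_of_neZero w
    exact mem_filter.mpr ⟨mem_product.mpr ⟨mem_range.mpr (by dsimp only; omega),
      mem_range.mpr (by dsimp only; omega)⟩, hocc⟩
  · intro uv _ uv' _ heq
    simp only [Prod.mk.injEq] at heq
    exact Prod.ext (Nat.eq_of_mul_eq_mul_left (Nat.pos_of_neZero h) heq.1)
      (Nat.eq_of_mul_eq_mul_left (Nat.pos_of_neZero w) heq.2)

lemma prod_tile [NeZero h] [NeZero w] {uv : ℕ × ℕ} (huv : uv ∈ tileIndices a b h w)
    (f : Fin h × Fin w → ℝ) :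
    ∏ c ∈ (tile h w uv : Finset (Fin a × Fin b)), f (Fin.ofNat h c.1, Fin.ofNat w c.2) =
      ∏ ij, f ij := by
  refine prod_nbij (fun c => (Fin.ofNat h c.1, Fin.ofNat w c.2)) (fun _ _ => mem_univ _)
    (fun c hc c' hc' heq => ?_) (fun ij _ => ?_) fun _ _ => rfl
  · simp only [tile, coe_filter, mem_univ, true_and, Set.mem_ofPred_eq] at hc hc'
    simp only [Prod.mk.injEq, Fin.ext_iff, Fin.val_ofNat] at heq
    refine Prod.ext (Fin.ext ?_) (Fin.ext ?_)
    · rw [← Nat.div_add_mod c.1 h, ← Nat.div_add_mod c'.1 h, hc.1, hc'.1, heq.1]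
    · rw [← Nat.div_add_mod c.2 w, ← Nat.div_add_mod c'.2 w, hc.2, hc'.2, heq.2]
  · have hij := add_lt_of_mem_tileIndices huv ij.1.isLt ij.2.isLt
    exact ⟨_, mem_tile_of_lt ij.1.isLt ij.2.isLt hij.1 hij.2, by
      simp only [ofNat_mul_add ij.1.isLt, ofNat_mul_add ij.2.isLt]⟩

def emptyTiles (M₀ : Fin a × Fin b → Bool) (h w : ℕ) : Finset (ℕ × ℕ) :=
  (tileIndices a b h w).filter fun uv => ∀ c ∈ tile h w uv, M₀ c = false

lemma card_tileIndices_le_card_emptyTiles_add (M₀ : Fin a × Fin b → Bool) :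
    #(tileIndices a b h w) ≤ #(emptyTiles M₀ h w) + numMines M₀ := by
  rw [emptyTiles, ← card_filter_add_card_filter_not
    (fun uv => ∀ c ∈ tile h w uv, M₀ c = false)]
  refine Nat.add_le_add_left ((card_le_card (t := (univ.filter fun c => M₀ c = true).image
    fun c => ((c.1 : ℕ) / h, (c.2 : ℕ) / w)) fun uv huv => ?_).trans card_image_le) _
  obtain ⟨-, hbad⟩ := mem_filter.mp huv
  push Not at hbad
  obtain ⟨c, hc, hmine⟩ := hbad
  simp only [tile, mem_filter, mem_univ, true_and] at hc
  exact mem_image.mpr ⟨c, mem_filter.mpr ⟨mem_univ c, by simpa using hmine⟩,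
    Prod.ext hc.1 hc.2⟩

lemma le_two_mul_mul_div {n d : ℕ} (hd : 0 < d) (hdn : d ≤ n) : n ≤ 2 * d * (n / d) := by
  have h1 := Nat.lt_div_mul_add (a := n) hd
  have h2 : 1 ≤ n / d := (Nat.one_le_div_iff hd).mpr hdn
  nlinarith

lemma mul_le_card_tileIndices (hh : 0 < h) (hw : 0 < w) (hha : h ≤ a) (hwb : w ≤ b) :
    a * b ≤ 4 * (h * w) * #(tileIndices a b h w) := by
  rw [tileIndices, card_product, card_range, card_range]
  calc a * b ≤ (2 * h * (a / h)) * (2 * w * (b / w)) :=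
        Nat.mul_le_mul (le_two_mul_mul_div hh hha) (le_two_mul_mul_div hw hwb)
    _ = 4 * (h * w) * (a / h * (b / w)) := by ring

end Tiles

section MinesAbove

variable {ι : Type*} {p : ℝ}

def aboveWeight (p : ℝ) (M₀ : ι → Bool) (c : ι) (x : Bool) : ℝ :=
  if M₀ c = true then (if x = true then 1 else 0) else (if x = true then p else 1 - p)

lemma aboveWeight_nonneg (hp0 : 0 ≤ p) (hp1 : p ≤ 1) (M₀ : ι → Bool) (c : ι) (x : Bool) :
    0 ≤ aboveWeight p M₀ c x := by
  unfold aboveWeight; split_ifs <;> linarith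

lemma aboveWeight_false_add_true (M₀ : ι → Bool) (c : ι) :
    aboveWeight p M₀ c false + aboveWeight p M₀ c true = 1 := by
  by_cases h : M₀ c = true <;> simp [aboveWeight, h]

lemma mineProbAbove_eq_cubeProb {a b : ℕ} (M₀ : Fin a × Fin b → Bool)
    (E : Set (Fin a × Fin b → Bool)) :
    mineProbAbove a b p M₀ E = cubeProb (aboveWeight p M₀) E :=
  rfl

lemma prod_tile_aboveWeight {a b h w : ℕ} [NeZero h] [NeZero w] {M₀ : Fin a × Fin b → Bool}
    {uv : ℕ × ℕ} (huv : uv ∈ emptyTiles M₀ h w) (P : Fin h × Fin w → Bool) :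
    ∏ c ∈ tile h w uv, aboveWeight p M₀ c (periodize P c) =
      ∏ ij, if P ij = true then p else 1 - p := by
  obtain ⟨huvT, hempty⟩ := mem_filter.mp huv
  rw [← prod_tile huvT]
  exact prod_congr rfl fun c hc => by simp only [aboveWeight, hempty c hc]; rfl

lemma prod_ite_P1 (p : ℝ) :
    ∏ ij, (if P1 ij = true then p else 1 - p) = p ^ 6 * (1 - p) ^ 58 := by
  rw [prod_ite, prod_const, prod_const]
  congr 2

end MinesAbove

lemma rpow_nine_tenths_mul_le {x : ℝ} (hx : 2 ^ 90 ≤ x) : x ^ (0.9 : ℝ) * 512 ≤ x := by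
  have hx0 : 0 < x := lt_of_lt_of_le (by positivity) hx
  have h512 : (512 : ℝ) ≤ x ^ (0.1 : ℝ) := calc
    (512 : ℝ) = ((2 : ℝ) ^ 90) ^ (0.1 : ℝ) := by
        rw [← Real.rpow_natCast, ← Real.rpow_mul zero_le_two]; norm_num
    _ ≤ x ^ (0.1 : ℝ) := Real.rpow_le_rpow (by positivity) hx (by norm_num)
  calc x ^ (0.9 : ℝ) * 512 ≤ x ^ (0.9 : ℝ) * x ^ (0.1 : ℝ) := by gcongr
    _ = x := by rw [← Real.rpow_add hx0]; norm_num

lemma two_rpow_mul_exp_le {k Q : ℝ} (hk : 0 ≤ k) (hQ : 4 * k ≤ Q) :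
    2 ^ k * Real.exp (-Q / 2) ≤ Real.exp (-k / 4) := by
  rw [Real.rpow_def_of_pos two_pos, ← Real.exp_add, Real.exp_le_exp]
  nlinarith [Real.log_two_lt_d9]

lemma le_card_emptyTiles {a b : ℕ} (ha : 2 ^ 45 ≤ a) (hb : 2 ^ 45 ≤ b)
    (M₀ : Fin a × Fin b → Bool) (hM₀ : (numMines M₀ : ℝ) < ((a * b : ℕ) : ℝ) ^ (0.9 : ℝ)) :
    ((a * b : ℕ) : ℝ) ≤ 512 * #(emptyTiles M₀ 8 8) := by
  have htiles : a * b ≤ 256 * (#(emptyTiles M₀ 8 8) + numMines M₀) :=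
    (mul_le_card_tileIndices (h := 8) (w := 8) (by norm_num) (by norm_num) (by omega)
      (by omega)).trans (Nat.mul_le_mul_left _ (card_tileIndices_le_card_emptyTiles_add M₀))
  have hn : (2 : ℝ) ^ 90 ≤ ((a * b : ℕ) : ℝ) := by
    exact_mod_cast (show 2 ^ 90 = 2 ^ 45 * 2 ^ 45 by norm_num) ▸ Nat.mul_le_mul ha hb
  have hmines := rpow_nine_tenths_mul_le hn
  have htiles' : ((a * b : ℕ) : ℝ) ≤ 256 * (#(emptyTiles M₀ 8 8) + numMines M₀) := by
    exact_mod_cast htiles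
  nlinarith

theorem one_sub_exp_le_mineProbAbove {a b : ℕ} (ha : 2 ^ 45 ≤ a) (hb : 2 ^ 45 ≤ b)
    {ε p : ℝ} (hε : 0 ≤ ε) (hp0 : 0 ≤ p) (hp1 : p ≤ 1 - ε) (M₀ : Fin a × Fin b → Bool)
    (hM₀ : (numMines M₀ : ℝ) < ((a * b : ℕ) : ℝ) ^ (0.9 : ℝ)) :
    1 - Real.exp (-(ε ^ 58 / 2048 * ((a * b : ℕ) : ℝ) * p ^ 6) / 4) ≤
      mineProbAbove a b p M₀
        {M | ε ^ 58 / 2048 * ((a * b : ℕ) : ℝ) * p ^ 6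
          < ((numOcc M P1 + numOcc M P2 : ℕ) : ℝ)} := by
  set n : ℝ := ((a * b : ℕ) : ℝ)
  set k := ε ^ 58 / 2048 * n * p ^ 6
  set J := emptyTiles M₀ 8 8
  have hρ₀ := aboveWeight_nonneg hp0 (by linarith) M₀
  have hρ := aboveWeight_false_add_true (p := p) M₀
  have hq : ∀ uv ∈ J, ∏ c ∈ tile 8 8 uv, aboveWeight p M₀ c (periodize P1 c) =
      p ^ 6 * (1 - p) ^ 58 := fun uv huv => by
    rw [prod_tile_aboveWeight huv, prod_ite_P1]
  have hfew : {M : Fin a × Fin b → Bool | k < ((numOcc M P1 + numOcc M P2 : ℕ) : ℝ)}ᶜ ⊆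
      {M | (#(J.filter fun uv => ∀ c ∈ tile 8 8 uv, M c = periodize P1 c) : ℝ) ≤ k} := by
    intro M hM
    simp only [Set.mem_compl_iff, Set.mem_ofPred_eq, not_lt] at hM ⊢
    refine le_trans ?_ hM
    exact_mod_cast (card_agree_le_numOcc M P1 (filter_subset _ _)).trans (Nat.le_add_right _ _)
  have hQ : 4 * k ≤ p ^ 6 * (1 - p) ^ 58 * #J := by
    have hJ := le_card_emptyTiles ha hb M₀ hM₀
    have hε58 : ε ^ 58 ≤ (1 - p) ^ 58 := pow_le_pow_left₀ hε (by linarith) 58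
    calc 4 * k = p ^ 6 * ε ^ 58 * (n / 512) := by ring
      _ ≤ p ^ 6 * (1 - p) ^ 58 * #J := by gcongr; linarith
  rw [mineProbAbove_eq_cubeProb, ← compl_compl {M | k < _}, cubeProb_compl hρ]
  linarith [cubeProb_mono hρ₀ hfew, two_rpow_mul_exp_le (by positivity) hQ,
    cubeProb_card_agree_le hρ₀ hρ (tile 8 8) J (pairwiseDisjoint_tile _) (periodize P1) hq k]

theorem statement_16_general
    (aN bN : ℕ → ℕ)
    (ha : Filter.Tendsto aN Filter.atTop Filter.atTop)
    (hb : Filter.Tendsto bN Filter.atTop Filter.atTop)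
    (ε : ℝ) (hε : 0 < ε)
    (p : ℕ → ℝ) (hp0 : ∀ N, 0 ≤ p N) (hp1 : ∀ N, p N < 1 - ε) :
    ∃ C > (0 : ℝ), ∀ᶠ N in Filter.atTop,
      ∀ M₀ : Fin (aN N) × Fin (bN N) → Bool,
        (numMines M₀ : ℝ) < ((aN N * bN N : ℕ) : ℝ) ^ (0.9 : ℝ) →
        1 - Real.exp (-(C * ((aN N * bN N : ℕ) : ℝ) * p N ^ 6) / 4) ≤
          mineProbAbove (aN N) (bN N) (p N) M₀
            {M | C * ((aN N * bN N : ℕ) : ℝ) * p N ^ 6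
              < ((numOcc M P1 + numOcc M P2 : ℕ) : ℝ)} := by
  refine ⟨ε ^ 58 / 2048, by positivity, ?_⟩
  filter_upwards [ha.eventually_ge_atTop (2 ^ 45), hb.eventually_ge_atTop (2 ^ 45)]
    with N haN hbN M₀ hM₀
  exact one_sub_exp_le_mineProbAbove haN hbN hε.le (hp0 N) (hp1 N).le M₀ hM₀

/-- for `p * n^(1/6) → ∞` with `p < 1 - ε`, there is `C > 0` (depending
only on `ε`) such that for `n` large enough, for every mine assignment `M₀` with fewer
than `n^0.9` mines, `(M₀)_p` contains more than `C n p^6` occurrences of `P1` and `P2`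
with probability at least `1 - exp(-C n p^6 / 4)`. -/
theorem statement_16
    (aN bN : ℕ → ℕ)
    (ha : Filter.Tendsto aN Filter.atTop Filter.atTop)
    (hb : Filter.Tendsto bN Filter.atTop Filter.atTop)
    (ha0 : ∀ N, 0 < aN N) (hb0 : ∀ N, 0 < bN N)
    (ε : ℝ) (hε : 0 < ε)
    (p : ℕ → ℝ) (hp0 : ∀ N, 0 ≤ p N) (hp1 : ∀ N, p N < 1 - ε)
    (hcrit : Filter.Tendsto
      (fun N => p N * ((aN N * bN N : ℕ) : ℝ) ^ ((1 : ℝ) / 6))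
      Filter.atTop Filter.atTop) :
    ∃ C > (0 : ℝ), ∀ᶠ N in Filter.atTop,
      ∀ M₀ : Fin (aN N) × Fin (bN N) → Bool,
        (numMines M₀ : ℝ) < ((aN N * bN N : ℕ) : ℝ) ^ (0.9 : ℝ) →
        1 - Real.exp (-(C * ((aN N * bN N : ℕ) : ℝ) * p N ^ 6) / 4) ≤
          mineProbAbove (aN N) (bN N) (p N) M₀
            {M | C * ((aN N * bN N : ℕ) : ℝ) * p N ^ 6
              < ((numOcc M P1 + numOcc M P2 : ℕ) : ℝ)} :=
  statement_16_general aN bN ha hb ε hε p hp0 hp1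

end Minesweeper
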